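/- Suppose (𝒳, S, γ, (Λ_a)_{a∈A}) is a spectral decomposition system for a Euclidean space 𝔥 with {Λ_a : a ∈ A} closed in L(𝒳,𝔥). Let D be a nonempty S-invariant subset of 𝒳 and let X ∈ 𝔥. Then N_F(X; γ⁻¹(D)) = {Λ_a y : y ∈ N_F(γ(X); D), a ∈ A_X}. -/

import Mathlib

open Filter Topology Set Metric
open scoped RealInnerProductSpace

noncomputable section

/-- A spectral decomposition system `(𝒳, S, γ, (Λ_a)_{a ∈ A})` for the space `H`:
`S` acts on `𝒳` by linear isometries (via `act`), `γ : H → 𝒳` is the spectral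
mapping, each `Λ a : 𝒳 → H` is a linear isometry, and the axioms [A], [B], [C] hold,
with `τ` the `S`-invariant ordering mapping of axiom [A]. -/
structure SDS (𝒳 H : Type*) [NormedAddCommGroup 𝒳] [InnerProductSpace ℝ 𝒳]
    [NormedAddCommGroup H] [InnerProductSpace ℝ H]
    (S : Type*) [Group S] (A : Type*) where
  act : S →* (𝒳 ≃ₗᵢ[ℝ] 𝒳)
  γ : H → 𝒳
  Λ : A → 𝒳 →ₗᵢ[ℝ] H
  τ : 𝒳 → 𝒳
  τ_inv : ∀ (s : S) (x : 𝒳), τ (act s x) = τ x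
  τ_orbit : ∀ x : 𝒳, ∃ s : S, τ x = act s x
  γΛ : ∀ (a : A) (x : 𝒳), γ (Λ a x) = τ x
  decomp : ∀ X : H, ∃ a : A, X = Λ a (γ X)
  inner_le : ∀ X Y : H, ⟪X, Y⟫ ≤ ⟪γ X, γ Y⟫

variable {𝒳 H S A : Type*} [NormedAddCommGroup 𝒳] [InnerProductSpace ℝ 𝒳]
    [NormedAddCommGroup H] [InnerProductSpace ℝ H] [Group S]

/-- The set `{Λ_a : a ∈ A}`, regarded as a subset of the space `L(𝒳, H)` of
continuous linear maps with the operator norm. -/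
def SDS.LambdaSet (𝔖 : SDS 𝒳 H S A) : Set (𝒳 →L[ℝ] H) :=
  {L | ∃ a : A, L = (𝔖.Λ a).toContinuousLinearMap}

/-- `A_X = {a ∈ A : X = Λ_a (γ X)}`. -/
def SDS.AX (𝔖 : SDS 𝒳 H S A) (X : H) : Set A := {a | X = 𝔖.Λ a (𝔖.γ X)}

/-- The Fréchet normal cone to `D` at `x`: empty if `x ∉ D`, and otherwise the set of
`y` with `limsup_{z → x, z ∈ D \ {x}} ⟨z - x, y⟩ / ‖z - x‖ ≤ 0`, expressed in ε-δ form. -/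
def fNormal {E : Type*} [NormedAddCommGroup E] [InnerProductSpace ℝ E]
    (D : Set E) (x : E) : Set E :=
  {y | x ∈ D ∧ ∀ ε : ℝ, 0 < ε → ∃ δ : ℝ, 0 < δ ∧
    ∀ z ∈ D, ‖z - x‖ < δ → ⟪z - x, y⟫ ≤ ε * ‖z - x‖}

/-!
For `⊇`: test `Λ_a y` against `Z ∈ γ⁻¹(D)` by applying [C] to `Z` and `Λ_a (y + r γX)`. By [A],
`γ (Λ_a (y + r γX)) = s • (y + r γX)` for some `s ∈ S`, and the inequality compares `Z` with the
point `s⁻¹ • γZ` of `D`, which lies within `‖Z - X‖ + 2‖y‖/r` of `γX`. The error terms are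
`r ‖Z - X‖² / 2` and the normality defect of `y` at that point; `r ≈ ε / ‖Z - X‖` balances them.

For `⊆`: decompose `X + tY = Λ_{b_t} γ(X + tY)` by [B]. Then `W_t = Λ_{b_t} γX ∈ γ⁻¹(D)` is within
`t‖Y‖` of `X + tY`, which for a Fréchet normal `Y` forces `(W_t - X)/t → 0`. Since `{Λ_a}` is
compact, a subsequence of `Λ_{b_t}` converges to some `Λ_a`, with `a ∈ A_X` because `W_t → X`,
and `Y = Λ_a y` for a limit `y` of `(γ(X + tY) - γX)/t`. Finally `D = Λ_a⁻¹(γ⁻¹ D)` by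
`S`-invariance, and Fréchet normals pull back along the isometry `Λ_a`.
-/

section FrechetNormal

variable {E F : Type*} [NormedAddCommGroup E] [InnerProductSpace ℝ E]
  [NormedAddCommGroup F] [InnerProductSpace ℝ F]

theorem mem_fNormal_preimage_of_map_mem (L : E →ₗᵢ[ℝ] F) {C : Set F} {x y : E}
    (h : L y ∈ fNormal C (L x)) : y ∈ fNormal (L ⁻¹' C) x := by
  obtain ⟨hx, hC⟩ := h
  refine ⟨hx, fun ε hε => ?_⟩
  obtain ⟨δ, hδ, hδC⟩ := hC ε hε
  refine ⟨δ, hδ, fun z hz hzx => ?_⟩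
  have hL : L z - L x = L (z - x) := (map_sub L z x).symm
  have := hδC (L z) hz (by rwa [hL, L.norm_map])
  rwa [hL, L.norm_map, L.inner_map_map] at this

theorem exists_inner_le_of_mem_fNormal {D : Set E} {x y : E} (hy : y ∈ fNormal D x)
    {ε M : ℝ} (hε : 0 < ε) (hM : 0 < M) :
    ∃ δ > 0, ∀ z ∈ D, ∀ h : ℝ, h < δ → ‖z - x‖ ≤ M * h → ⟪z - x, y⟫ ≤ ε * h := by
  obtain ⟨δ, hδ, hyD⟩ := hy.2 (ε / M) (by positivity)
  refine ⟨δ / M, by positivity, fun z hz h hhδ hzh => ?_⟩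
  calc ⟪z - x, y⟫ ≤ ε / M * ‖z - x‖ := hyD z hz (hzh.trans_lt ((lt_div_iff₀' hM).mp hhδ))
    _ ≤ ε / M * (M * h) := by gcongr
    _ = ε * h := by field_simp

theorem norm_sub_sq_le_of_norm_add_smul_sub_le {x y w : E} {t : ℝ}
    (h : ‖x + t • y - w‖ ≤ t * ‖y‖) : ‖w - x‖ ^ 2 ≤ 2 * t * ⟪w - x, y⟫ := by
  have hsq : ‖t • y - (w - x)‖ ^ 2 ≤ (t * ‖y‖) ^ 2 := by
    rw [show t • y - (w - x) = x + t • y - w by abel]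
    exact pow_le_pow_left₀ (norm_nonneg _) h 2
  rw [norm_sub_sq_real, norm_smul, real_inner_smul_left, Real.norm_eq_abs, mul_pow, sq_abs,
    real_inner_comm] at hsq
  nlinarith

theorem tendsto_inv_smul_sub_of_mem_fNormal {ι : Type*} {l : Filter ι} {C : Set E} {x y : E}
    (hy : y ∈ fNormal C x) {t : ι → ℝ} {w : ι → E} (ht : ∀ i, 0 < t i)
    (ht0 : Tendsto t l (𝓝 0)) (hw : ∀ i, w i ∈ C) (hwt : ∀ i, ‖x + t i • y - w i‖ ≤ t i * ‖y‖) :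
    Tendsto (fun i => (t i)⁻¹ • (w i - x)) l (𝓝 0) := by
  have hsq i := norm_sub_sq_le_of_norm_add_smul_sub_le (hwt i)
  have h2t i : 0 ≤ 2 * t i := by linarith [ht i]
  have hle i : ‖w i - x‖ ≤ 2 * t i * ‖y‖ := by
    have := mul_le_mul_of_nonneg_left (real_inner_le_norm (w i - x) y) (h2t i)
    nlinarith [hsq i, mul_nonneg (h2t i) (norm_nonneg y)]
  rw [Metric.tendsto_nhds]
  intro ε hε
  obtain ⟨δ, hδ, hyC⟩ := hy.2 (ε / 4) (by positivity)
  have hnear : ∀ᶠ i in l, 2 * t i * ‖y‖ < δ :=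
    (by simpa using (ht0.const_mul 2).mul_const ‖y‖ : Tendsto (fun i => 2 * t i * ‖y‖) l (𝓝 0))
      |>.eventually_lt_const hδ
  filter_upwards [hnear] with i hi
  have hinner := hyC (w i) (hw i) ((hle i).trans_lt hi)
  have hsmall : ‖w i - x‖ ≤ ε / 2 * t i := by
    have := mul_le_mul_of_nonneg_left hinner (h2t i)
    nlinarith [hsq i, mul_nonneg hε.le (ht i).le]
  rw [dist_zero_right, norm_smul, norm_inv, Real.norm_of_nonneg (ht i).le,
    inv_mul_lt_iff₀ (ht i)]
  nlinarith [ht i]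

theorem LinearIsometry.norm_map_sub_le_of_inner_le (g : E →ₗᵢ[ℝ] E) {x y : E} {r : ℝ}
    (hr : 0 < r) (h : ⟪y + r • x, x⟫ ≤ ⟪g (y + r • x), x⟫) : ‖g x - x‖ ≤ 2 * ‖y‖ / r := by
  have hsq : ‖g x - x‖ ^ 2 = 2 * (‖x‖ ^ 2 - ⟪g x, x⟫) := by
    rw [norm_sub_sq_real, g.norm_map]; ring
  have hgy : ⟪g y, x⟫ - ⟪y, x⟫ ≤ ‖y‖ * ‖g x - x‖ := by
    calc ⟪g y, x⟫ - ⟪y, x⟫ = ⟪g y, x - g x⟫ := by rw [inner_sub_right, g.inner_map_map]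
      _ ≤ ‖g y‖ * ‖x - g x‖ := real_inner_le_norm _ _
      _ = ‖y‖ * ‖g x - x‖ := by rw [g.norm_map, norm_sub_rev]
  rw [map_add, map_smul, inner_add_left, inner_add_left, real_inner_smul_left,
    real_inner_smul_left, real_inner_self_eq_norm_sq] at h
  have hr' : 0 ≤ 2 * ‖y‖ / r := by positivity
  have : ‖g x - x‖ ^ 2 ≤ ‖g x - x‖ * (2 * ‖y‖ / r) := by
    rw [mul_div_assoc', le_div_iff₀ hr]
    nlinarith
  nlinarith

end FrechetNormal

namespace SDS

theorem finiteDimensional [FiniteDimensional ℝ H] (𝔖 : SDS 𝒳 H S A) : FiniteDimensional ℝ 𝒳 := by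
  obtain ⟨a, -⟩ := 𝔖.decomp 0
  exact .of_injective (𝔖.Λ a).toLinearMap (𝔖.Λ a).injective

variable (𝔖 : SDS 𝒳 H S A)

theorem norm_γ (X : H) : ‖𝔖.γ X‖ = ‖X‖ := by
  obtain ⟨a, ha⟩ := 𝔖.decomp X
  conv_rhs => rw [ha, (𝔖.Λ a).norm_map]

theorem τ_γ (X : H) : 𝔖.τ (𝔖.γ X) = 𝔖.γ X := by
  obtain ⟨a, ha⟩ := 𝔖.decomp X
  conv_rhs => rw [ha, 𝔖.γΛ]

theorem γ_Λ_γ (a : A) (X : H) : 𝔖.γ (𝔖.Λ a (𝔖.γ X)) = 𝔖.γ X := by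
  rw [𝔖.γΛ, 𝔖.τ_γ]

theorem inner_le_inner_τ (u v : 𝒳) : ⟪u, v⟫ ≤ ⟪𝔖.τ u, 𝔖.τ v⟫ := by
  obtain ⟨a, -⟩ := 𝔖.decomp 0
  calc ⟪u, v⟫ = ⟪𝔖.Λ a u, 𝔖.Λ a v⟫ := ((𝔖.Λ a).inner_map_map u v).symm
    _ ≤ ⟪𝔖.γ (𝔖.Λ a u), 𝔖.γ (𝔖.Λ a v)⟫ := 𝔖.inner_le _ _
    _ = ⟪𝔖.τ u, 𝔖.τ v⟫ := by rw [𝔖.γΛ, 𝔖.γΛ]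

theorem inner_γ_sub_inner_le (Z X : H) : ⟪𝔖.γ Z, 𝔖.γ X⟫ - ⟪Z, X⟫ ≤ ‖Z - X‖ ^ 2 / 2 := by
  have := norm_sub_sq_real (𝔖.γ Z) (𝔖.γ X)
  rw [𝔖.norm_γ, 𝔖.norm_γ] at this
  nlinarith [norm_sub_sq_real Z X, sq_nonneg ‖𝔖.γ Z - 𝔖.γ X‖]

theorem norm_γ_sub_γ_le (Z X : H) : ‖𝔖.γ Z - 𝔖.γ X‖ ≤ ‖Z - X‖ := by
  refine pow_le_pow_iff_left₀ (norm_nonneg _) (norm_nonneg _) two_ne_zero |>.mp ?_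
  rw [norm_sub_sq_real, norm_sub_sq_real, 𝔖.norm_γ, 𝔖.norm_γ]
  linarith [𝔖.inner_le Z X]

theorem preimage_Λ_preimage_γ {D : Set 𝒳} (hD : ∀ (s : S), ∀ x ∈ D, 𝔖.act s x ∈ D) (a : A) :
    𝔖.Λ a ⁻¹' (𝔖.γ ⁻¹' D) = D := by
  ext w
  obtain ⟨s, hs⟩ := 𝔖.τ_orbit w
  simp only [mem_preimage, 𝔖.γΛ, hs]
  refine ⟨fun h => ?_, hD s w⟩
  simpa [map_inv, LinearIsometryEquiv.inv_def] using hD s⁻¹ _ h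

theorem norm_act_γ_sub_le {X : H} {y : 𝒳} {r : ℝ} (hr : 0 < r) {s : S}
    (hs : 𝔖.τ (y + r • 𝔖.γ X) = 𝔖.act s (y + r • 𝔖.γ X)) :
    ‖𝔖.act s (𝔖.γ X) - 𝔖.γ X‖ ≤ 2 * ‖y‖ / r :=
  (𝔖.act s).toLinearIsometry.norm_map_sub_le_of_inner_le hr <| by
    simpa [hs, 𝔖.τ_γ] using 𝔖.inner_le_inner_τ (y + r • 𝔖.γ X) (𝔖.γ X)

theorem inner_sub_Λ_le {X Z : H} {a : A} (ha : a ∈ 𝔖.AX X) {y w : 𝒳} {r : ℝ} (hr : 0 ≤ r)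
    {s : S} (hs : 𝔖.τ (y + r • 𝔖.γ X) = 𝔖.act s (y + r • 𝔖.γ X)) (hw : 𝔖.act s w = 𝔖.γ Z) :
    ⟪Z - X, 𝔖.Λ a y⟫ ≤ ⟪w - 𝔖.γ X, y⟫ + r / 2 * ‖Z - X‖ ^ 2 := by
  have hC := 𝔖.inner_le Z (𝔖.Λ a (y + r • 𝔖.γ X))
  rw [𝔖.γΛ, hs, ← hw, LinearIsometryEquiv.inner_map_map, map_add, map_smul, ← ha,
    inner_add_right, inner_add_right, real_inner_smul_right, real_inner_smul_right] at hC
  have hτw : ⟪w, 𝔖.γ X⟫ ≤ ⟪𝔖.γ Z, 𝔖.γ X⟫ :=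
    calc ⟪w, 𝔖.γ X⟫ ≤ ⟪𝔖.τ w, 𝔖.τ (𝔖.γ X)⟫ := 𝔖.inner_le_inner_τ _ _
      _ = ⟪𝔖.γ Z, 𝔖.γ X⟫ := by rw [← 𝔖.τ_inv s w, hw, 𝔖.τ_γ, 𝔖.τ_γ]
  have hX : ⟪X, 𝔖.Λ a y⟫ = ⟪𝔖.γ X, y⟫ := by
    conv_lhs => rw [ha]
    exact (𝔖.Λ a).inner_map_map _ _
  rw [inner_sub_left, inner_sub_left, hX]
  nlinarith [𝔖.inner_γ_sub_inner_le Z X]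

theorem Λ_mem_fNormal_preimage {D : Set 𝒳} (hD : ∀ (s : S), ∀ x ∈ D, 𝔖.act s x ∈ D) {X : H}
    {y : 𝒳} (hy : y ∈ fNormal D (𝔖.γ X)) {a : A} (ha : a ∈ 𝔖.AX X) :
    𝔖.Λ a y ∈ fNormal (𝔖.γ ⁻¹' D) X := by
  refine ⟨hy.1, fun ε hε => ?_⟩
  obtain ⟨δ, hδ, hyD⟩ :=
    exists_inner_le_of_mem_fNormal hy (half_pos hε) (M := 1 + 4 * ‖y‖ / ε) (by positivity)
  refine ⟨δ, hδ, fun Z hZ hZX => ?_⟩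
  rcases (norm_nonneg (Z - X)).eq_or_lt with h0 | hpos
  · simp [norm_sub_eq_zero_iff.mp h0.symm]
  set h := ‖Z - X‖
  set r := ε / (2 * h)
  have hr : 0 < r := by positivity
  obtain ⟨s, hs⟩ := 𝔖.τ_orbit (y + r • 𝔖.γ X)
  set w := 𝔖.act s⁻¹ (𝔖.γ Z)
  have hw : 𝔖.act s w = 𝔖.γ Z := by
    simp [w, map_inv, LinearIsometryEquiv.inv_def]
  have hwX : ‖w - 𝔖.γ X‖ ≤ (1 + 4 * ‖y‖ / ε) * h :=
    calc ‖w - 𝔖.γ X‖ = ‖𝔖.γ Z - 𝔖.act s (𝔖.γ X)‖ := by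
          rw [← (𝔖.act s).norm_map, map_sub, hw]
      _ ≤ ‖𝔖.γ Z - 𝔖.γ X‖ + ‖𝔖.act s (𝔖.γ X) - 𝔖.γ X‖ :=
          (norm_sub_le_norm_sub_add_norm_sub _ (𝔖.γ X) _).trans_eq (by rw [norm_sub_rev (𝔖.γ X)])
      _ ≤ h + 2 * ‖y‖ / r := add_le_add (𝔖.norm_γ_sub_γ_le Z X) (𝔖.norm_act_γ_sub_le hr hs)
      _ = (1 + 4 * ‖y‖ / ε) * h := by simp only [r]; field_simp; ring
  have hw_near := hyD w (hD _ _ hZ) h hZX hwX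
  have hZ_est := 𝔖.inner_sub_Λ_le ha hr.le hs hw
  have hrh : r / 2 * h ^ 2 = ε / 4 * h := by simp only [r]; field_simp; ring
  nlinarith

theorem isCompact_LambdaSet [FiniteDimensional ℝ H] (hcl : IsClosed 𝔖.LambdaSet) :
    IsCompact 𝔖.LambdaSet := by
  have := 𝔖.finiteDimensional
  refine Metric.isCompact_of_isClosed_isBounded hcl
    ((isBounded_closedBall (x := 0) (r := 1)).subset ?_)
  rintro _ ⟨a, rfl⟩
  exact mem_closedBall_zero_iff.2 (𝔖.Λ a).norm_toContinuousLinearMap_le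

theorem exists_mem_AX_of_mem_fNormal_preimage [FiniteDimensional ℝ H]
    (hcl : IsClosed 𝔖.LambdaSet) {D : Set 𝒳} {X Y : H} (hY : Y ∈ fNormal (𝔖.γ ⁻¹' D) X) :
    ∃ a ∈ 𝔖.AX X, ∃ y, Y = 𝔖.Λ a y := by
  have := 𝔖.finiteDimensional
  set t : ℕ → ℝ := fun k => 1 / ((k : ℝ) + 1)
  have ht k : 0 < t k := Nat.one_div_pos_of_nat
  have ht0 : Tendsto t atTop (𝓝 0) := tendsto_one_div_add_atTop_nhds_zero_nat
  choose b hb using fun k => 𝔖.decomp (X + t k • Y)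
  set W : ℕ → H := fun k => 𝔖.Λ (b k) (𝔖.γ X)
  set v : ℕ → 𝒳 := fun k => (t k)⁻¹ • (𝔖.γ (X + t k • Y) - 𝔖.γ X)
  have hγ k : ‖𝔖.γ (X + t k • Y) - 𝔖.γ X‖ ≤ t k * ‖Y‖ := by
    simpa [norm_smul, abs_of_pos (ht k)] using 𝔖.norm_γ_sub_γ_le (X + t k • Y) X
  have hW k : X + t k • Y - W k = 𝔖.Λ (b k) (𝔖.γ (X + t k • Y) - 𝔖.γ X) := by
    rw [map_sub, ← hb k]
  have hv k : ‖v k‖ ≤ ‖Y‖ := by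
    rw [norm_smul, norm_inv, Real.norm_of_nonneg (ht k).le, inv_mul_le_iff₀ (ht k)]
    exact hγ k
  have hΛv k : 𝔖.Λ (b k) (v k) = Y - (t k)⁻¹ • (W k - X) := by
    rw [map_smul, ← hW, smul_sub, smul_add, smul_smul, inv_mul_cancel₀ (ht k).ne', one_smul,
      smul_sub]
    abel
  have hrem : Tendsto (fun k => (t k)⁻¹ • (W k - X)) atTop (𝓝 0) :=
    tendsto_inv_smul_sub_of_mem_fNormal hY ht ht0 (fun k => by simpa [W, 𝔖.γ_Λ_γ] using hY.1)
      (fun k => by rw [hW, LinearIsometry.norm_map]; exact hγ k)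
  have hWX : Tendsto W atTop (𝓝 X) := by
    have := ht0.smul hrem
    rw [zero_smul] at this
    refine tendsto_sub_nhds_zero_iff.mp (this.congr fun k => ?_)
    rw [smul_smul, mul_inv_cancel₀ (ht k).ne', one_smul]
  have hΛvY : Tendsto (fun k => 𝔖.Λ (b k) (v k)) atTop (𝓝 Y) := by
    simpa [hΛv] using (tendsto_const_nhds (x := Y)).sub hrem
  obtain ⟨⟨L, y⟩, ⟨⟨a, rfl⟩, -⟩, φ, hφ, hlim⟩ :=
    ((𝔖.isCompact_LambdaSet hcl).prod (isCompact_closedBall (0 : 𝒳) ‖Y‖)).tendsto_subseq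
      (x := fun k => ((𝔖.Λ (b k)).toContinuousLinearMap, v k))
      (fun k => ⟨⟨b k, rfl⟩, mem_closedBall_zero_iff.2 (hv k)⟩)
  have happly : Continuous fun p : (𝒳 →L[ℝ] H) × 𝒳 => p.1 p.2 :=
    continuous_fst.clm_apply continuous_snd
  have happly_γX : Continuous fun p : (𝒳 →L[ℝ] H) × 𝒳 => p.1 (𝔖.γ X) :=
    continuous_fst.clm_apply continuous_const
  exact ⟨a, tendsto_nhds_unique (hWX.comp hφ.tendsto_atTop) ((happly_γX.tendsto _).comp hlim), y,
    tendsto_nhds_unique (hΛvY.comp hφ.tendsto_atTop) ((happly.tendsto _).comp hlim)⟩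

end SDS

theorem frechet_normal_spectral_set_general
    [FiniteDimensional ℝ H]
    (𝔖 : SDS 𝒳 H S A) (hcl : IsClosed 𝔖.LambdaSet)
    (D : Set 𝒳) (hDinv : ∀ (s : S), ∀ x ∈ D, 𝔖.act s x ∈ D)
    (X : H) :
    fNormal (𝔖.γ ⁻¹' D) X = {Y | ∃ y ∈ fNormal D (𝔖.γ X), ∃ a ∈ 𝔖.AX X, Y = 𝔖.Λ a y} := by
  ext Y
  constructor
  · intro hY
    obtain ⟨a, ha, y, rfl⟩ := 𝔖.exists_mem_AX_of_mem_fNormal_preimage hcl hY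
    refine ⟨y, ?_, a, ha, rfl⟩
    rw [← 𝔖.preimage_Λ_preimage_γ hDinv a]
    exact mem_fNormal_preimage_of_map_mem (𝔖.Λ a) (ha ▸ hY)
  · rintro ⟨y, hy, a, ha, rfl⟩
    exact 𝔖.Λ_mem_fNormal_preimage hDinv hy ha

/-- For a nonempty `S`-invariant `D ⊆ 𝒳` and `X ∈ H`:
`N_F(X; γ⁻¹(D)) = {Λ_a y : y ∈ N_F(γ(X); D), a ∈ A_X}`. -/
theorem frechet_normal_spectral_set
    [FiniteDimensional ℝ 𝒳] [FiniteDimensional ℝ H]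
    (𝔖 : SDS 𝒳 H S A) (hcl : IsClosed 𝔖.LambdaSet)
    (D : Set 𝒳) (hD : D.Nonempty) (hDinv : ∀ (s : S), ∀ x ∈ D, 𝔖.act s x ∈ D)
    (X : H) :
    fNormal (𝔖.γ ⁻¹' D) X = {Y | ∃ y ∈ fNormal D (𝔖.γ X), ∃ a ∈ 𝔖.AX X, Y = 𝔖.Λ a y} :=
  frechet_normal_spectral_set_general 𝔖 hcl D hDinv X
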